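/- arXiv:1807.02899 — 2 statements merged into one kernel-verified Lean document; each statement's English description precedes it below -/
import Mathlib

section
/- Let G be an (n, m) graph with adjacency eigenvalues λ_1 ≥ … ≥ λ_n. Then the spread S(G) = λ_1 - λ_n satisfies S(G) ≤ λ_1 + √(2m - λ_1²) ≤ 2√m. -/
open Matrix Polynomial BigOperators

noncomputable section

namespace SpreadPaper

variable {V : Type*}

/-- The adjacency matrix of a simple graph over `ℝ` (classical decidability). -/
noncomputable def adjMat (G : SimpleGraph V) : Matrix V V ℝ :=
  letI := Classical.decRel G.Adj
  G.adjMatrix ℝ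

lemma adjMat_isHermitian (G : SimpleGraph V) : (adjMat G).IsHermitian := by
  letI := Classical.decRel G.Adj
  ext i j
  simp [adjMat, Matrix.conjTranspose_apply, SimpleGraph.adjMatrix_apply, G.adj_comm]

/-- The degree of a vertex (classical decidability). -/
noncomputable def deg [Fintype V] (G : SimpleGraph V) (v : V) : ℕ :=
  letI := Classical.decRel G.Adj
  G.degree v

/-- The signless Laplacian matrix `D + A` of a graph. -/
noncomputable def signQ [Fintype V] [DecidableEq V] (G : SimpleGraph V) : Matrix V V ℝ :=
  Matrix.diagonal (fun v => (deg G v : ℝ)) + adjMat G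

lemma signQ_isHermitian [Fintype V] [DecidableEq V] (G : SimpleGraph V) :
    (signQ G).IsHermitian :=
  (Matrix.isHermitian_diagonal _).add (adjMat_isHermitian G)

/-- The Laplacian matrix `D - A` of a graph. -/
noncomputable def lap [Fintype V] [DecidableEq V] (G : SimpleGraph V) : Matrix V V ℝ :=
  Matrix.diagonal (fun v => (deg G v : ℝ)) - adjMat G

lemma lap_isHermitian [Fintype V] [DecidableEq V] (G : SimpleGraph V) :
    (lap G).IsHermitian :=
  (Matrix.isHermitian_diagonal _).sub (adjMat_isHermitian G)

/-- The largest eigenvalue of a Hermitian real matrix. -/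
noncomputable def maxEig {m : Type*} [Fintype m] [DecidableEq m] {A : Matrix m m ℝ}
    (hA : A.IsHermitian) : ℝ :=
  ⨆ i, hA.eigenvalues i

/-- The smallest eigenvalue of a Hermitian real matrix. -/
noncomputable def minEig {m : Type*} [Fintype m] [DecidableEq m] {A : Matrix m m ℝ}
    (hA : A.IsHermitian) : ℝ :=
  ⨅ i, hA.eigenvalues i

/-- The spread (largest minus smallest eigenvalue) of a Hermitian real matrix. -/
noncomputable def sprd {m : Type*} [Fintype m] [DecidableEq m] {A : Matrix m m ℝ}
    (hA : A.IsHermitian) : ℝ :=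
  maxEig hA - minEig hA

/-- `q` lists the eigenvalues of the Hermitian matrix `A` (with multiplicity) in
nonincreasing order. -/
def IsDescSpectrum {m : Type*} [Fintype m] [DecidableEq m] {A : Matrix m m ℝ}
    (hA : A.IsHermitian) {k : ℕ} (q : Fin k → ℝ) : Prop :=
  Antitone q ∧ ∃ e : Fin k ≃ m, ∀ i, q i = hA.eigenvalues (e i)

noncomputable instance edgeSetFintype [Fintype V] (G : SimpleGraph V) : Fintype G.edgeSet :=
  Set.Finite.fintype (Set.toFinite _)

/-- The number of edges of a graph. -/
noncomputable def numEdges (G : SimpleGraph V) : ℕ := Nat.card G.edgeSet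

/-- The total graph of `G`: vertices are the vertices and edges of `G`, with adjacency
given by adjacency in `G`, adjacency in the line graph, or vertex-edge incidence. -/
def totalGraph (G : SimpleGraph V) : SimpleGraph (V ⊕ G.edgeSet) where
  Adj x y :=
    match x, y with
    | Sum.inl u, Sum.inl v => G.Adj u v
    | Sum.inl u, Sum.inr e => u ∈ (e : Sym2 V)
    | Sum.inr e, Sum.inl u => u ∈ (e : Sym2 V)
    | Sum.inr e, Sum.inr f => e ≠ f ∧ ∃ v, v ∈ (e : Sym2 V) ∧ v ∈ (f : Sym2 V)
  symm := by
    constructor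
    rintro (u|e) (v|f) h
    · exact G.adj_symm h
    · exact h
    · exact h
    · exact ⟨h.1.symm, h.2.choose, h.2.choose_spec.2, h.2.choose_spec.1⟩
  loopless := by
    constructor
    rintro (u|e) h
    · exact G.loopless.irrefl u h
    · exact h.1 rfl

/-- The join `G ∨ H` of two graphs: all edges between the two vertex sets are added. -/
def joinG {α β : Type*} (G : SimpleGraph α) (H : SimpleGraph β) : SimpleGraph (α ⊕ β) where
  Adj x y :=
    match x, y with
    | Sum.inl a, Sum.inl b => G.Adj a b
    | Sum.inr a, Sum.inr b => H.Adj a b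
    | Sum.inl _, Sum.inr _ => True
    | Sum.inr _, Sum.inl _ => True
  symm := by
    constructor
    rintro (a|a) (b|b) h
    · exact G.adj_symm h
    · exact trivial
    · exact trivial
    · exact H.adj_symm h
  loopless := by
    constructor
    rintro (a|a) h
    · exact G.loopless.irrefl a h
    · exact H.loopless.irrefl a h

/-- The disjoint union of two graphs. -/
def dunion {α β : Type*} (G : SimpleGraph α) (H : SimpleGraph β) : SimpleGraph (α ⊕ β) where
  Adj x y :=
    match x, y with
    | Sum.inl a, Sum.inl b => G.Adj a b
    | Sum.inr a, Sum.inr b => H.Adj a b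
    | Sum.inl _, Sum.inr _ => False
    | Sum.inr _, Sum.inl _ => False
  symm := by
    constructor
    rintro (a|a) (b|b) h
    · exact G.adj_symm h
    · exact h.elim
    · exact h.elim
    · exact H.adj_symm h
  loopless := by
    constructor
    rintro (a|a) h
    · exact G.loopless.irrefl a h
    · exact H.loopless.irrefl a h

/-- `G` is `r`-regular. -/
def IsReg [Fintype V] (G : SimpleGraph V) (r : ℕ) : Prop := ∀ v, deg G v = r

/-- The minimum degree of a graph. -/
noncomputable def minDeg [Fintype V] (G : SimpleGraph V) : ℕ := sInf (Set.range (deg G))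

/-- The maximum degree of a graph. -/
noncomputable def maxDeg [Fintype V] (G : SimpleGraph V) : ℕ := sSup (Set.range (deg G))

/-- The first Zagreb index of a graph: the sum of the squares of the vertex degrees. -/
noncomputable def zagreb [Fintype V] (G : SimpleGraph V) : ℕ := ∑ v, (deg G v) ^ 2

/-- The vertex connectivity of `G` is at most `k`: some set of at most `k` vertices
disconnects `G`. -/
def HasConnLe (G : SimpleGraph V) (k : ℕ) : Prop :=
  ∃ U : Set V, Nat.card U ≤ k ∧ (Uᶜ).Nonempty ∧ ¬ (G.induce Uᶜ).Preconnected

/-!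
The eigenvalues of the adjacency matrix `A` sum to `tr A = 0` and their squares sum to
`tr A² = 2m`. Hence `λₙ ≤ 0 ≤ λ₁` and `λ₁² + λₙ² ≤ 2m`, so `-λₙ ≤ √(2m - λ₁²)`. The second
inequality is `(a + b)² ≤ 2(a² + b²)` with `a = λ₁`, `b = √(2m - λ₁²)`.
-/

theorem _root_.Matrix.IsHermitian.trace_mul_self_eq_sum_sq_eigenvalues {𝕜 n : Type*} [RCLike 𝕜]
    [Fintype n] [DecidableEq n] {A : Matrix n n 𝕜} (hA : A.IsHermitian) :
    (A * A).trace = ∑ i, ((hA.eigenvalues i ^ 2 : ℝ) : 𝕜) := by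
  conv_lhs => rw [hA.spectral_theorem, ← map_mul, Unitary.conjStarAlgAut_apply, trace_mul_cycle,
    Unitary.coe_star_mul_self, one_mul, diagonal_mul_diagonal, trace_diagonal]
  simp [sq]

section FiniteFamily

variable {ι : Type*} [Fintype ι] [Nonempty ι] {f : ι → ℝ}

theorem iInf_nonpos_of_sum_eq_zero (hf : ∑ i, f i = 0) : ⨅ i, f i ≤ 0 := by
  obtain ⟨i, -, hi⟩ :=
    Finset.exists_le_of_sum_le (f := f) (g := fun _ => 0) Finset.univ_nonempty (by simp [hf])
  exact (ciInf_le (Finite.bddBelow_range f) i).trans hi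

theorem iSup_nonneg_of_sum_eq_zero (hf : ∑ i, f i = 0) : 0 ≤ ⨆ i, f i := by
  obtain ⟨i, -, hi⟩ :=
    Finset.exists_le_of_sum_le (f := fun _ => 0) (g := f) Finset.univ_nonempty (by simp [hf])
  exact hi.trans (le_ciSup (Finite.bddAbove_range f) i)

theorem sq_iSup_add_sq_iInf_le_sum_sq (hf : ∑ i, f i = 0) :
    (⨆ i, f i) ^ 2 + (⨅ i, f i) ^ 2 ≤ ∑ i, f i ^ 2 := by
  classical
  obtain ⟨i, hi⟩ := exists_eq_ciSup_of_finite (f := f)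
  obtain ⟨j, hj⟩ := exists_eq_ciInf_of_finite (f := f)
  rw [← hi, ← hj]
  by_cases hij : i = j
  · have hfi : f i = 0 := le_antisymm (hij ▸ hj ▸ iInf_nonpos_of_sum_eq_zero hf)
      (hi ▸ iSup_nonneg_of_sum_eq_zero hf)
    subst hij
    simpa [hfi] using Finset.sum_nonneg fun k _ => sq_nonneg (f k)
  · rw [← Finset.sum_pair (f := fun k => f k ^ 2) hij]
    exact Finset.sum_le_sum_of_subset_of_nonneg (Finset.subset_univ _)
      fun k _ _ => sq_nonneg (f k)

theorem sq_iSup_le_sum_sq : (⨆ i, f i) ^ 2 ≤ ∑ i, f i ^ 2 := by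
  obtain ⟨i, hi⟩ := exists_eq_ciSup_of_finite (f := f)
  exact hi ▸ Finset.single_le_sum (f := fun k => f k ^ 2) (fun k _ => sq_nonneg (f k))
    (Finset.mem_univ i)

theorem iSup_sub_iInf_le_of_sum_eq_zero (hf : ∑ i, f i = 0) :
    (⨆ i, f i) - (⨅ i, f i) ≤ (⨆ i, f i) + √(∑ i, f i ^ 2 - (⨆ i, f i) ^ 2) := by
  have hmin : -(⨅ i, f i) ≤ √(∑ i, f i ^ 2 - (⨆ i, f i) ^ 2) :=
    Real.le_sqrt_of_sq_le (by linarith [neg_sq (⨅ i, f i), sq_iSup_add_sq_iInf_le_sum_sq hf])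
  linarith

end FiniteFamily

theorem add_sqrt_two_mul_sub_sq_le {a m : ℝ} (ha : a ^ 2 ≤ 2 * m) :
    a + √(2 * m - a ^ 2) ≤ 2 * √m := by
  have hb := Real.sq_sqrt (sub_nonneg.2 ha)
  have hm := Real.sq_sqrt (show 0 ≤ m by nlinarith [sq_nonneg a])
  refine (abs_le_of_sq_le_sq' ?_ (by positivity)).2
  -- (a + b)² ≤ 2 (a² + b²) = 4 m
  nlinarith [sq_nonneg (a - √(2 * m - a ^ 2))]

theorem trace_adjMat [Fintype V] (G : SimpleGraph V) : (adjMat G).trace = 0 := by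
  classical
  exact G.trace_adjMatrix ℝ

theorem sum_degrees_eq_two_mul_numEdges [Fintype V] (G : SimpleGraph V) [DecidableRel G.Adj] :
    ∑ v, G.degree v = 2 * numEdges G := by
  rw [G.sum_degrees_eq_twice_card_edges, numEdges, Nat.card_eq_card_toFinset]
  congr 2
  ext
  simp

theorem trace_adjMat_mul_self [Fintype V] (G : SimpleGraph V) :
    (adjMat G * adjMat G).trace = 2 * numEdges G := by
  classical
  have hdeg : ∀ v, (adjMat G * adjMat G) v v = G.degree v :=
    G.adjMatrix_mul_self_apply_self
  simp only [trace, diag, hdeg]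
  exact_mod_cast sum_degrees_eq_two_mul_numEdges G

theorem sum_eigenvalues_adjMat [Fintype V] [DecidableEq V] (G : SimpleGraph V) :
    ∑ i, (adjMat_isHermitian G).eigenvalues i = 0 := by
  simpa [trace_adjMat] using ((adjMat_isHermitian G).trace_eq_sum_eigenvalues).symm

theorem sum_sq_eigenvalues_adjMat [Fintype V] [DecidableEq V] (G : SimpleGraph V) :
    ∑ i, (adjMat_isHermitian G).eigenvalues i ^ 2 = 2 * numEdges G := by
  simpa [trace_adjMat_mul_self] using
    ((adjMat_isHermitian G).trace_mul_self_eq_sum_sq_eigenvalues).symm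

/-- `S(G) ≤ λ₁ + √(2m - λ₁²) ≤ 2√m`. -/
theorem spread_le {V : Type*} [Fintype V] [DecidableEq V] [Nonempty V] (G : SimpleGraph V) :
    sprd (adjMat_isHermitian G) ≤
        maxEig (adjMat_isHermitian G) +
          Real.sqrt (2 * (numEdges G : ℝ) - (maxEig (adjMat_isHermitian G)) ^ 2) ∧
      maxEig (adjMat_isHermitian G) +
          Real.sqrt (2 * (numEdges G : ℝ) - (maxEig (adjMat_isHermitian G)) ^ 2) ≤
        2 * Real.sqrt (numEdges G : ℝ) := by
  have hsum := sum_eigenvalues_adjMat G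
  have hsq := sum_sq_eigenvalues_adjMat G
  exact ⟨hsq ▸ iSup_sub_iInf_le_of_sum_eq_zero hsum,
    add_sqrt_two_mul_sub_sq_le (hsq ▸ sq_iSup_le_sum_sq)⟩

end SpreadPaper
end
end

section
/- Let G be a connected graph on n vertices with m edges. Then the signless Laplacian spread of the total graph satisfies S_Q(T(G)) ≥ 2√((3m/n - Z_g(G)/m)² + 10m/n - 2Z_g(G)/m + 1), where Z_g(G) is the first Zagreb index of G. -/
open Matrix Polynomial BigOperators

noncomputable section

namespace SpreadPaper

variable {V : Type*}

/-!
Test vectors that are constant on each part of the partition `V(T(G)) = V(G) ⊔ E(G)` reduce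
the Rayleigh quotient of `Q(T(G))` to the generalized eigenproblem of the block sums of `Q`:
`6m`, `2m` and `2Z - 2m`, because a vertex `v` of `T(G)` has degree `2 d(v)` and an edge `uw`
has degree `d(u) + d(w)`. The two eigenvalues of the resulting `2 × 2` quotient matrix are
Rayleigh quotients of `Q(T(G))`, hence lie between `q_min` and `q_1`; their difference is the
claimed bound.
-/

open Finset

section Rayleigh

variable {ι : Type*} [Fintype ι] [DecidableEq ι] {A : Matrix ι ι ℝ}

lemma exists_dotProduct_mulVec_eq_sum_eigenvalues (hA : A.IsHermitian) (x : ι → ℝ) :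
    ∃ y : ι → ℝ, x ⬝ᵥ (A *ᵥ x) = ∑ i, hA.eigenvalues i * y i ^ 2 ∧
      x ⬝ᵥ x = ∑ i, y i ^ 2 := by
  set U : Matrix ι ι ℝ := (hA.eigenvectorUnitary : Matrix ι ι ℝ) with hU
  have hstar : star U = Uᵀ := conjTranspose_eq_transpose_of_trivial U
  refine ⟨Uᵀ *ᵥ x, ?_, ?_⟩
  · conv_lhs => rw [hA.spectral_theorem, Unitary.conjStarAlgAut_apply, ← hU]
    rw [← mulVec_mulVec, ← mulVec_mulVec, hstar, dotProduct_mulVec, ← mulVec_transpose]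
    simp [mulVec_diagonal, dotProduct, pow_two, mul_left_comm]
  · have hUUt : U *ᵥ (Uᵀ *ᵥ x) = x := by
      rw [mulVec_mulVec, ← hstar, show U * star U = 1 from hA.eigenvectorUnitary.2.2,
        one_mulVec]
    calc x ⬝ᵥ x = (x ᵥ* U) ⬝ᵥ (Uᵀ *ᵥ x) := by rw [← dotProduct_mulVec, hUUt]
      _ = ∑ i, (Uᵀ *ᵥ x) i ^ 2 := by simp [← mulVec_transpose, dotProduct, pow_two]

lemma minEig_mul_le_dotProduct_mulVec (hA : A.IsHermitian) (x : ι → ℝ) :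
    minEig hA * (x ⬝ᵥ x) ≤ x ⬝ᵥ (A *ᵥ x) := by
  obtain ⟨y, hAx, hx⟩ := exists_dotProduct_mulVec_eq_sum_eigenvalues hA x
  rw [hAx, hx, mul_sum]
  gcongr with i
  exact ciInf_le (Set.finite_range _).bddBelow i

lemma dotProduct_mulVec_le_maxEig_mul (hA : A.IsHermitian) (x : ι → ℝ) :
    x ⬝ᵥ (A *ᵥ x) ≤ maxEig hA * (x ⬝ᵥ x) := by
  obtain ⟨y, hAx, hx⟩ := exists_dotProduct_mulVec_eq_sum_eigenvalues hA x
  rw [hAx, hx, mul_sum]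
  gcongr with i
  exact le_ciSup (Set.finite_range _).bddAbove i

lemma sub_le_sprd_of_dotProduct_mulVec_eq (hA : A.IsHermitian) {x y : ι → ℝ} {l₁ l₂ : ℝ}
    (hx : 0 < x ⬝ᵥ x) (hy : 0 < y ⬝ᵥ y)
    (hl₁ : x ⬝ᵥ (A *ᵥ x) = l₁ * (x ⬝ᵥ x)) (hl₂ : y ⬝ᵥ (A *ᵥ y) = l₂ * (y ⬝ᵥ y)) :
    l₁ - l₂ ≤ sprd hA := by
  have hmax : l₁ ≤ maxEig hA :=
    le_of_mul_le_mul_right (hl₁ ▸ dotProduct_mulVec_le_maxEig_mul hA x) hx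
  have hmin : minEig hA ≤ l₂ :=
    le_of_mul_le_mul_right (hl₂ ▸ minEig_mul_le_dotProduct_mulVec hA y) hy
  unfold sprd
  linarith

end Rayleigh

lemma exists_pencil_eigenvector {a b c p q l : ℝ} (hp : 0 < p) (hq : 0 < q)
    (hl : (l * p - a) * (l * q - c) = b ^ 2) :
    ∃ s t : ℝ, 0 < p * s ^ 2 + q * t ^ 2 ∧
      a * s ^ 2 + 2 * b * s * t + c * t ^ 2 = l * (p * s ^ 2 + q * t ^ 2) := by
  by_cases hdeg : b = 0 ∧ l * p = a
  · refine ⟨1, 0, by simpa using hp, ?_⟩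
    rw [← hdeg.2]
    ring
  · refine ⟨b, l * p - a, ?_, by linear_combination -(l * p - a) * hl⟩
    have : b ≠ 0 ∨ l * p - a ≠ 0 := by
      by_contra! h
      exact hdeg ⟨h.1, by linarith [h.2]⟩
    rcases this with h | h <;> positivity

section Blocks

variable {ι κ : Type*} [Fintype ι] [Fintype κ]

lemma sumElim_dotProduct_sumElim (s t : ℝ) :
    Sum.elim (fun _ : ι => s) (fun _ : κ => t) ⬝ᵥ Sum.elim (fun _ => s) (fun _ => t) =
      Fintype.card ι * s ^ 2 + Fintype.card κ * t ^ 2 := by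
  simp [dotProduct, pow_two]

lemma sumElim_dotProduct_mulVec_sumElim {A : Matrix (ι ⊕ κ) (ι ⊕ κ) ℝ} (hA : A.IsSymm)
    (s t : ℝ) :
    Sum.elim (fun _ : ι => s) (fun _ : κ => t) ⬝ᵥ (A *ᵥ Sum.elim (fun _ => s) (fun _ => t)) =
      (∑ i, ∑ j, A (.inl i) (.inl j)) * s ^ 2 + 2 * (∑ i, ∑ k, A (.inl i) (.inr k)) * s * t +
        (∑ k, ∑ l, A (.inr k) (.inr l)) * t ^ 2 := by
  have hsymm : ∑ k, ∑ i, A (.inr k) (.inl i) = ∑ i, ∑ k, A (.inl i) (.inr k) := by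
    rw [sum_comm]
    exact sum_congr rfl fun i _ => sum_congr rfl fun k _ => hA.apply _ _
  simp only [dotProduct, mulVec, Fintype.sum_sum_type, Sum.elim_inl, Sum.elim_inr,
    ← sum_mul, mul_add, sum_add_distrib, ← mul_sum, hsymm]
  ring

theorem two_mul_sqrt_le_sprd_of_blockSums [DecidableEq (ι ⊕ κ)] [Nonempty ι] [Nonempty κ]
    {A : Matrix (ι ⊕ κ) (ι ⊕ κ) ℝ} (hA : A.IsHermitian) {a b c : ℝ}
    (ha : ∑ i, ∑ j, A (.inl i) (.inl j) = a) (hb : ∑ i, ∑ k, A (.inl i) (.inr k) = b)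
    (hc : ∑ k, ∑ l, A (.inr k) (.inr l) = c) :
    2 * √(((a / Fintype.card ι - c / Fintype.card κ) / 2) ^ 2 +
      b ^ 2 / (Fintype.card ι * Fintype.card κ)) ≤ sprd hA := by
  set p : ℝ := (Fintype.card ι : ℝ)
  set q : ℝ := (Fintype.card κ : ℝ)
  have hp : 0 < p := Nat.cast_pos.mpr Fintype.card_pos
  have hq : 0 < q := Nat.cast_pos.mpr Fintype.card_pos
  set d := (a / p - c / q) / 2
  set r := √(d ^ 2 + b ^ 2 / (p * q))
  have hr : r ^ 2 = d ^ 2 + b ^ 2 / (p * q) := Real.sq_sqrt (by positivity)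
  set m := (a / p + c / q) / 2
  -- `m ± r` are the eigenvalues of the quotient matrix `!![a/p, b/p; b/q, c/q]`
  have hpencil : ∀ l, (l - m) ^ 2 = r ^ 2 → ∃ x : ι ⊕ κ → ℝ,
      0 < x ⬝ᵥ x ∧ x ⬝ᵥ (A *ᵥ x) = l * (x ⬝ᵥ x) := by
    intro l hl
    have hroot : (l * p - a) * (l * q - c) = b ^ 2 := by
      rw [hr] at hl
      simp only [m, d] at hl
      field_simp at hl
      refine mul_left_cancel₀ (by positivity : 4 * p * q ≠ 0) ?_
      linear_combination hl
    obtain ⟨s, t, hpos, hst⟩ := exists_pencil_eigenvector hp hq hroot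
    refine ⟨Sum.elim (fun _ => s) (fun _ => t), ?_, ?_⟩ <;>
      rw [sumElim_dotProduct_sumElim]
    · exact hpos
    · rw [sumElim_dotProduct_mulVec_sumElim (isHermitian_iff_isSymm.mp hA), ha, hb, hc, hst]
  obtain ⟨x, hx, hAx⟩ := hpencil (m + r) (by ring)
  obtain ⟨y, hy, hAy⟩ := hpencil (m - r) (by ring)
  linarith [sub_le_sprd_of_dotProduct_mulVec_eq hA hx hy hAx hAy]

end Blocks

section Matrices

variable {W : Type*} (H : SimpleGraph W)

lemma adjMat_apply [DecidableRel H.Adj] (p q : W) :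
    adjMat H p q = if H.Adj p q then 1 else 0 := by
  unfold adjMat
  convert H.adjMatrix_apply p q

lemma deg_eq_card_filter [Fintype W] [DecidableRel H.Adj] (p : W) :
    deg H p = #{q | H.Adj p q} := by
  unfold deg
  rw [← SimpleGraph.card_neighborFinset_eq_degree, SimpleGraph.neighborFinset_eq_filter]
  convert rfl

lemma sum_adjMat_apply [Fintype W] (p : W) : ∑ q, adjMat H p q = deg H p := by
  classical
  simp [adjMat_apply, sum_boole, deg_eq_card_filter]

lemma signQ_apply_of_ne [Fintype W] [DecidableEq W] {p q : W} (hpq : p ≠ q) :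
    signQ H p q = adjMat H p q := by
  simp [signQ, diagonal_apply_ne _ hpq]

lemma sum_signQ_apply [Fintype W] [DecidableEq W] (p : W) : ∑ q, signQ H p q = 2 * deg H p := by
  simp only [signQ, Matrix.add_apply, diagonal_apply, sum_add_distrib, sum_ite_eq, mem_univ,
    ↓reduceIte, sum_adjMat_apply]
  ring

end Matrices

lemma card_edgeSet_eq_numEdges [Fintype V] (G : SimpleGraph V) :
    Fintype.card G.edgeSet = numEdges G :=
  Nat.card_eq_fintype_card.symm

section Incidence

variable [Fintype V] [DecidableEq V] (G : SimpleGraph V)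

lemma card_filter_mem_edge_eq_two (e : G.edgeSet) : #{v | v ∈ (e : Sym2 V)} = 2 := by
  obtain ⟨e, he⟩ := e
  induction e using Sym2.ind with
  | h u w =>
    rw [← card_pair (G.ne_of_adj he)]
    congr 1
    ext v
    simp

lemma card_filter_edges_mem_eq_deg (v : V) :
    #{e : G.edgeSet | v ∈ (e : Sym2 V)} = deg G v := by
  classical
  unfold deg
  rw [← SimpleGraph.card_incidenceFinset_eq_degree, ← card_map (Function.Embedding.subtype _)]
  congr 1
  ext e
  simp [SimpleGraph.incidenceSet, and_comm]

lemma sum_deg_eq_two_mul_numEdges : ∑ v, deg G v = 2 * numEdges G :=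
  calc ∑ v, deg G v = ∑ v, #{e : G.edgeSet | v ∈ (e : Sym2 V)} := by
        simp_rw [card_filter_edges_mem_eq_deg]
    _ = ∑ e : G.edgeSet, #{v | v ∈ (e : Sym2 V)} :=
        sum_card_bipartiteAbove_eq_sum_card_bipartiteBelow _
    _ = 2 * numEdges G := by
        simp [card_filter_mem_edge_eq_two, numEdges, mul_comm]

lemma sum_edges_sum_deg_eq_zagreb :
    ∑ e : G.edgeSet, ∑ v with v ∈ (e : Sym2 V), deg G v = zagreb G := by
  simp_rw [sum_filter]
  rw [sum_comm]
  simp_rw [← sum_filter, sum_const, card_filter_edges_mem_eq_deg, smul_eq_mul, zagreb, sq]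

lemma deg_lineGraph_add_two {e : G.edgeSet} {u w : V} (he : (e : Sym2 V) = s(u, w)) :
    deg G.lineGraph e + 2 = deg G u + deg G w := by
  classical
  have huw : u ≠ w := G.ne_of_adj <| by
    rw [← SimpleGraph.mem_edgeSet, ← he]
    exact e.2
  let A : Finset G.edgeSet := {f | u ∈ (f : Sym2 V)}
  let B : Finset G.edgeSet := {f | w ∈ (f : Sym2 V)}
  have hunion : A ∪ B = insert e ({f | G.lineGraph.Adj e f} : Finset G.edgeSet) := by
    ext f
    by_cases hfe : f = e
    · subst hfe
      simp [A, B, he]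
    · simp [A, B, SimpleGraph.lineGraph_adj_iff_exists, he, hfe, Ne.symm hfe]
  have hinter : A ∩ B = {e} := by
    ext f
    simp [A, B, Sym2.mem_and_mem_iff huw, ← he, Subtype.ext_iff]
  have hcard := card_union_add_card_inter A B
  rw [hunion, hinter, card_insert_of_notMem (by simp), card_singleton,
    card_filter_edges_mem_eq_deg, card_filter_edges_mem_eq_deg] at hcard
  rw [deg_eq_card_filter]
  omega

end Incidence

section TotalGraphAdj

variable (G : SimpleGraph V)

@[simp] lemma totalGraph_adj_inl_inl {u v : V} :
    (totalGraph G).Adj (.inl u) (.inl v) ↔ G.Adj u v := Iff.rfl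

@[simp] lemma totalGraph_adj_inl_inr {v : V} {e : G.edgeSet} :
    (totalGraph G).Adj (.inl v) (.inr e) ↔ v ∈ (e : Sym2 V) := Iff.rfl

@[simp] lemma totalGraph_adj_inr_inl {v : V} {e : G.edgeSet} :
    (totalGraph G).Adj (.inr e) (.inl v) ↔ v ∈ (e : Sym2 V) := Iff.rfl

@[simp] lemma totalGraph_adj_inr_inr {e f : G.edgeSet} :
    (totalGraph G).Adj (.inr e) (.inr f) ↔ G.lineGraph.Adj e f :=
  G.lineGraph_adj_iff_exists.symm

end TotalGraphAdj

section TotalGraph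

variable [Fintype V] [DecidableEq V] (G : SimpleGraph V)

lemma deg_totalGraph_inl (v : V) : deg (totalGraph G) (.inl v) = 2 * deg G v := by
  classical
  rw [deg_eq_card_filter, card_filter, Fintype.sum_sum_type]
  simp only [totalGraph_adj_inl_inl, totalGraph_adj_inl_inr, ← card_filter]
  rw [← deg_eq_card_filter, card_filter_edges_mem_eq_deg]
  ring

lemma deg_totalGraph_inr (e : G.edgeSet) :
    deg (totalGraph G) (.inr e) = ∑ v with v ∈ (e : Sym2 V), deg G v := by
  classical
  rw [deg_eq_card_filter, card_filter, Fintype.sum_sum_type]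
  simp only [totalGraph_adj_inr_inl, totalGraph_adj_inr_inr, ← card_filter]
  rw [card_filter_mem_edge_eq_two, ← deg_eq_card_filter, add_comm]
  obtain ⟨e, he⟩ := e
  induction e using Sym2.ind with
  | h u w =>
    have huw : u ≠ w := G.ne_of_adj he
    rw [deg_lineGraph_add_two G rfl, ← sum_pair huw]
    congr 1
    ext v
    simp

lemma sum_signQ_totalGraph_inl_inr :
    ∑ v, ∑ e, signQ (totalGraph G) (.inl v) (.inr e) = 2 * (numEdges G : ℝ) := by
  classical
  simp only [signQ_apply_of_ne _ Sum.inl_ne_inr, adjMat_apply, totalGraph_adj_inl_inr, sum_boole,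
    card_filter_edges_mem_eq_deg]
  exact_mod_cast sum_deg_eq_two_mul_numEdges G

lemma sum_signQ_totalGraph_inr_inl :
    ∑ e, ∑ v, signQ (totalGraph G) (.inr e) (.inl v) = 2 * (numEdges G : ℝ) := by
  classical
  simp [signQ_apply_of_ne _ Sum.inr_ne_inl, adjMat_apply, sum_boole, card_filter_mem_edge_eq_two,
    numEdges, mul_comm]

lemma sum_signQ_totalGraph_inl_inl :
    ∑ u, ∑ v, signQ (totalGraph G) (.inl u) (.inl v) = 6 * (numEdges G : ℝ) := by
  have hrows : ∑ u, ∑ q, signQ (totalGraph G) (.inl u) q = 8 * (numEdges G : ℝ) := by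
    have hdeg : ∑ v, (deg G v : ℝ) = 2 * numEdges G := by
      exact_mod_cast sum_deg_eq_two_mul_numEdges G
    simp only [sum_signQ_apply, deg_totalGraph_inl, Nat.cast_mul, Nat.cast_ofNat, ← mul_sum, hdeg]
    ring
  simp only [Fintype.sum_sum_type, sum_add_distrib, sum_signQ_totalGraph_inl_inr] at hrows
  linarith

lemma sum_signQ_totalGraph_inr_inr :
    ∑ e, ∑ f, signQ (totalGraph G) (.inr e) (.inr f) = 2 * (zagreb G : ℝ) - 2 * numEdges G := by
  have hrows : ∑ e, ∑ q, signQ (totalGraph G) (.inr e) q = 2 * (zagreb G : ℝ) := by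
    simp only [sum_signQ_apply, deg_totalGraph_inr, ← mul_sum]
    exact_mod_cast congrArg (2 * ·) (sum_edges_sum_deg_eq_zagreb G)
  simp only [Fintype.sum_sum_type, sum_add_distrib, sum_signQ_totalGraph_inr_inl] at hrows
  linarith

end TotalGraph

/-- lower bound for the signless Laplacian spread of the total graph. -/
theorem signless_spread_totalGraph_lower {V : Type*} [Fintype V] [DecidableEq V]
    (G : SimpleGraph V) (hconn : G.Connected) (hn : 1 < Fintype.card V) :
    2 * Real.sqrt ((3 * (numEdges G : ℝ) / (Fintype.card V : ℝ) -
          (zagreb G : ℝ) / (numEdges G : ℝ)) ^ 2 +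
        10 * (numEdges G : ℝ) / (Fintype.card V : ℝ) -
        2 * (zagreb G : ℝ) / (numEdges G : ℝ) + 1) ≤
      sprd (signQ_isHermitian (totalGraph G)) := by
  have : Nontrivial V := Fintype.one_lt_card_iff_nontrivial.mp hn
  have : Nonempty G.edgeSet := by
    obtain ⟨u, hvu⟩ := hconn.preconnected.exists_adj_of_nontrivial (Classical.arbitrary V)
    exact ⟨⟨_, G.mem_edgeSet.mpr hvu⟩⟩
  have hm : (0 : ℝ) < numEdges G := by exact_mod_cast Nat.card_pos
  have hn' : (0 : ℝ) < Fintype.card V := by exact_mod_cast Fintype.card_pos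
  convert two_mul_sqrt_le_sprd_of_blockSums (signQ_isHermitian (totalGraph G))
    (sum_signQ_totalGraph_inl_inl G) (sum_signQ_totalGraph_inl_inr G)
    (sum_signQ_totalGraph_inr_inr G) using 3
  rw [card_edgeSet_eq_numEdges]
  field_simp
  ring

end SpreadPaper
end
end
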